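/- Let X be a perfectly paracompact hereditarily Baire topological space and Y any topological space. A map f : X → Y is weakly discontinuous if and only if f is piecewise continuous. -/

import Mathlib

/-!
Weak discontinuity lets one peel `X` transfinitely: `S 0 = X`, `S (a + 1) = S a ∩ closure D`
where `D` is the set of discontinuity points of `f|S a`, and intersections at limits. Each step
is strict while `S a` is non-empty, so some `S a` is empty. By induction, `(S a)ᶜ` is covered by
countably many closed sets on which `f` is continuous. At successors, `S a \ S (a + 1)` consists
of continuity points of `f|S a` and the open set `(S (a + 1))ᶜ` is `Fσ` by perfectness. At
limits, a locally finite refinement of the open cover `{(S b)ᶜ}` (paracompactness) glues the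
`n`-th pieces of all the `(S b)ᶜ` into one closed set on which `f` is still continuous.

Conversely, if `X = ⋃ n, C n` with `C n` closed and `f|C n` continuous, the Baire property of
`closure A` yields an open `W` meeting `A` with `W ∩ A ⊆ C n` for some `n`, so `f|A` is
continuous on the non-empty relatively open set `W ∩ A`. Applying this to every relatively open
subset of `A` shows that the discontinuity set of `f|A` is nowhere dense.
-/

open Set Topology

/-- A map `f : X → Y` is *weakly discontinuous* if for every non-empty subset `A ⊆ X`
the set of discontinuity points of the restriction `f|A` is nowhere dense in the
subspace `A`. -/
def WeaklyDiscontinuous {X Y : Type*} [TopologicalSpace X] [TopologicalSpace Y]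
    (f : X → Y) : Prop :=
  ∀ A : Set X, A.Nonempty →
    IsNowhereDense {a : A | ¬ ContinuousWithinAt f A (a : X)}

/-- A map `f : X → Y` is *piecewise continuous* if `X` has a countable closed cover
such that the restriction of `f` to each member of the cover is continuous. -/
def PiecewiseContinuous {X Y : Type*} [TopologicalSpace X] [TopologicalSpace Y]
    (f : X → Y) : Prop :=
  ∃ C : Set (Set X), C.Countable ∧ (∀ c ∈ C, IsClosed c) ∧ ⋃₀ C = Set.univ ∧
    ∀ c ∈ C, ContinuousOn f c

section PiecewiseContinuousOn

variable {X Y : Type*} [TopologicalSpace X] [TopologicalSpace Y] {f : X → Y} {s t : Set X}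

def PiecewiseContinuousOn (f : X → Y) (s : Set X) : Prop :=
  ∃ C : Set (Set X), C.Countable ∧ (∀ c ∈ C, IsClosed c) ∧ s ⊆ ⋃₀ C ∧ ∀ c ∈ C, ContinuousOn f c

theorem piecewiseContinuousOn_univ_iff :
    PiecewiseContinuousOn f univ ↔ PiecewiseContinuous f := by
  simp only [PiecewiseContinuousOn, PiecewiseContinuous, univ_subset_iff]

theorem ContinuousOn.piecewiseContinuousOn (h : ContinuousOn f s) (hs : IsClosed s) :
    PiecewiseContinuousOn f s :=
  ⟨{s}, countable_singleton s, by simpa, by simp, by simpa⟩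

theorem PiecewiseContinuousOn.mono (h : PiecewiseContinuousOn f t) (hst : s ⊆ t) :
    PiecewiseContinuousOn f s :=
  let ⟨C, hC, hcl, hcov, hcont⟩ := h
  ⟨C, hC, hcl, hst.trans hcov, hcont⟩

theorem PiecewiseContinuousOn.iUnion {ι : Sort*} [Countable ι] {s : ι → Set X}
    (h : ∀ i, PiecewiseContinuousOn f (s i)) : PiecewiseContinuousOn f (⋃ i, s i) := by
  choose C hC hcl hcov hcont using h
  refine ⟨⋃ i, C i, countable_iUnion hC, ?_, ?_, ?_⟩
  · simp only [mem_iUnion]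
    rintro c ⟨i, hc⟩
    exact hcl i c hc
  · simpa only [sUnion_iUnion] using iUnion_mono hcov
  · simp only [mem_iUnion]
    rintro c ⟨i, hc⟩
    exact hcont i c hc

theorem PiecewiseContinuousOn.union (hs : PiecewiseContinuousOn f s)
    (ht : PiecewiseContinuousOn f t) : PiecewiseContinuousOn f (s ∪ t) := by
  rw [union_eq_iUnion]
  exact .iUnion (Bool.forall_bool.2 ⟨ht, hs⟩)

theorem PiecewiseContinuousOn.exists_seq (h : PiecewiseContinuousOn f s) :
    ∃ E : ℕ → Set X, (∀ n, IsClosed (E n)) ∧ s ⊆ ⋃ n, E n ∧ ∀ n, ContinuousOn f (E n) := by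
  obtain ⟨C, hC, hcl, hcov, hcont⟩ := h
  obtain ⟨E, hE⟩ := (hC.insert ∅).exists_eq_range (insert_nonempty ∅ C)
  have hmem : ∀ n, E n ∈ insert ∅ C := fun n => hE ▸ mem_range_self n
  refine ⟨E, fun n => ?_, ?_, fun n => ?_⟩
  · rcases hmem n with h | h
    · exact h ▸ isClosed_empty
    · exact hcl _ h
  · rw [← sUnion_range, ← hE, sUnion_insert, empty_union]
    exact hcov
  · rcases hmem n with h | h
    · exact h ▸ continuousOn_empty f
    · exact hcont _ h

theorem LocallyFinite.piecewiseContinuousOn_iUnion {ι : Type*} {v : ι → Set X}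
    (hv : LocallyFinite v) (h : ∀ i, PiecewiseContinuousOn f (v i)) :
    PiecewiseContinuousOn f (⋃ i, v i) := by
  choose E hcl hcov hcont using fun i => (h i).exists_seq
  have hlf : ∀ m, LocallyFinite fun i => E i m ∩ closure (v i) := fun m =>
    hv.closure.subset fun i => inter_subset_right
  have hpiece : ∀ m, PiecewiseContinuousOn f (⋃ i, E i m ∩ closure (v i)) := fun m =>
    ContinuousOn.piecewiseContinuousOn
      ((hlf m).continuousOn_iUnion (fun i => (hcl i m).inter isClosed_closure)
        fun i => (hcont i m).mono inter_subset_left)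
      ((hlf m).isClosed_iUnion fun i => (hcl i m).inter isClosed_closure)
  refine (PiecewiseContinuousOn.iUnion hpiece).mono (iUnion_subset fun i x hx => ?_)
  obtain ⟨m, hm⟩ := mem_iUnion.1 (hcov i hx)
  exact mem_iUnion.2 ⟨m, mem_iUnion.2 ⟨i, hm, subset_closure hx⟩⟩

end PiecewiseContinuousOn

section PerfectlyParacompact

variable {X Y : Type*} [TopologicalSpace X] [TopologicalSpace Y] {f : X → Y}

theorem IsOpen.exists_eq_iUnion_isClosed (hperf : ∀ C : Set X, IsClosed C → IsGδ C)
    {O : Set X} (hO : IsOpen O) : ∃ K : ℕ → Set X, (∀ n, IsClosed (K n)) ∧ O = ⋃ n, K n := by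
  obtain ⟨U, hU, hOU⟩ := (hperf Oᶜ hO.isClosed_compl).eq_iInter_nat
  refine ⟨fun n => (U n)ᶜ, fun n => (hU n).isClosed_compl, ?_⟩
  rw [← compl_iInter, ← hOU, compl_compl]

theorem piecewiseContinuousOn_iUnion_of_isOpen [ParacompactSpace X]
    (hperf : ∀ C : Set X, IsClosed C → IsGδ C) {ι : Type*} {U : ι → Set X}
    (hU : ∀ i, IsOpen (U i)) (h : ∀ i, PiecewiseContinuousOn f (U i)) :
    PiecewiseContinuousOn f (⋃ i, U i) := by
  obtain ⟨K, hK, hUK⟩ := (isOpen_iUnion hU).exists_eq_iUnion_isClosed hperf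
  rw [hUK]
  refine PiecewiseContinuousOn.iUnion fun n => ?_
  obtain ⟨v, -, hKv, hv, hvU⟩ :=
    precise_refinement_set (hK n) U hU (hUK ▸ subset_iUnion K n)
  exact (hv.piecewiseContinuousOn_iUnion fun i => (h i).mono (hvU i)).mono hKv

end PerfectlyParacompact

section DiscontinuityDerivative

variable {X Y : Type*} [TopologicalSpace X] [TopologicalSpace Y] {f : X → Y} {s : Set X}

def discontinuitySet (f : X → Y) (s : Set X) : Set X :=
  {x ∈ s | ¬ ContinuousWithinAt f s x}

def discontinuityDerivative (f : X → Y) (s : Set X) : Set X :=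
  s ∩ closure (discontinuitySet f s)

theorem discontinuityDerivative_subset : discontinuityDerivative f s ⊆ s :=
  inter_subset_left

theorem IsClosed.discontinuityDerivative (hs : IsClosed s) :
    IsClosed (discontinuityDerivative f s) :=
  hs.inter isClosed_closure

theorem continuousWithinAt_of_mem_diff_discontinuityDerivative {x : X}
    (hx : x ∈ s \ discontinuityDerivative f s) : ContinuousWithinAt f s x := by
  by_contra hc
  exact hx.2 ⟨hx.1, subset_closure ⟨hx.1, hc⟩⟩

theorem WeaklyDiscontinuous.discontinuityDerivative_ne (hf : WeaklyDiscontinuous f)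
    (hs : s.Nonempty) : discontinuityDerivative f s ≠ s := by
  intro heq
  have : Nonempty s := hs.to_subtype
  have hdense : Dense {a : s | ¬ ContinuousWithinAt f s (a : X)} := by
    have himg : (↑) '' {a : s | ¬ ContinuousWithinAt f s (a : X)} = discontinuitySet f s := by
      ext x
      simp [discontinuitySet, and_comm]
    rw [Subtype.dense_iff, himg]
    exact inter_eq_left.1 heq
  have := hf s hs
  rw [IsNowhereDense, hdense.closure_eq, interior_univ] at this
  exact univ_nonempty.ne_empty this

theorem piecewiseContinuousOn_diff_discontinuityDerivative
    (hperf : ∀ C : Set X, IsClosed C → IsGδ C) (hs : IsClosed s) :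
    PiecewiseContinuousOn f (s \ discontinuityDerivative f s) := by
  obtain ⟨K, hK, hKeq⟩ :=
    (hs.discontinuityDerivative (f := f)).isOpen_compl.exists_eq_iUnion_isClosed hperf
  have hcont : ∀ n, ContinuousOn f (K n ∩ s) := fun n x hx => by
    have hx' : x ∈ (discontinuityDerivative f s)ᶜ := hKeq ▸ mem_iUnion_of_mem n hx.1
    exact (continuousWithinAt_of_mem_diff_discontinuityDerivative ⟨hx.2, hx'⟩).mono
      inter_subset_right
  refine (PiecewiseContinuousOn.iUnion fun n =>
    (hcont n).piecewiseContinuousOn ((hK n).inter hs)).mono fun x hx => ?_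
  obtain ⟨n, hn⟩ := mem_iUnion.1 (hKeq ▸ hx.2 : x ∈ ⋃ n, K n)
  exact mem_iUnion_of_mem n ⟨hn, hx.1⟩

end DiscontinuityDerivative

universe u

section IteratedDiscontinuityDerivative

variable {X : Type u} {Y : Type*} [TopologicalSpace X] [TopologicalSpace Y] {f : X → Y}

def iteratedDiscontinuityDerivative (f : X → Y) (a : Ordinal.{u}) : Set X :=
  ⋂ b : Iio a, discontinuityDerivative f (iteratedDiscontinuityDerivative f b)
termination_by a
decreasing_by exact b.2

local notation "S" => iteratedDiscontinuityDerivative f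

theorem mem_iteratedDiscontinuityDerivative {a : Ordinal.{u}} {x : X} :
    x ∈ S a ↔ ∀ b < a, x ∈ discontinuityDerivative f (S b) := by
  rw [iteratedDiscontinuityDerivative]
  simp

theorem iteratedDiscontinuityDerivative_zero : S 0 = univ := by
  ext x
  simp [mem_iteratedDiscontinuityDerivative]

theorem iteratedDiscontinuityDerivative_succ (a : Ordinal.{u}) :
    S (Order.succ a) = discontinuityDerivative f (S a) := by
  ext x
  refine ⟨fun hx => mem_iteratedDiscontinuityDerivative.1 hx a (Order.lt_succ a),
    fun hx => mem_iteratedDiscontinuityDerivative.2 fun b hb => ?_⟩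
  rcases (Order.lt_succ_iff.1 hb).lt_or_eq with hba | rfl
  · exact mem_iteratedDiscontinuityDerivative.1 (discontinuityDerivative_subset hx) b hba
  · exact hx

theorem antitone_iteratedDiscontinuityDerivative : Antitone S := fun _ _ hab _ hx =>
  mem_iteratedDiscontinuityDerivative.2 fun c hc =>
    mem_iteratedDiscontinuityDerivative.1 hx c (hc.trans_le hab)

theorem compl_iteratedDiscontinuityDerivative_of_isSuccLimit {a : Ordinal.{u}}
    (ha : Order.IsSuccLimit a) : (S a)ᶜ = ⋃ b : Iio a, (S b)ᶜ := by
  rw [← compl_iInter, compl_inj_iff]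
  refine Subset.antisymm (subset_iInter fun b => antitone_iteratedDiscontinuityDerivative b.2.le)
    fun x hx => mem_iteratedDiscontinuityDerivative.2 fun b hb => ?_
  rw [← iteratedDiscontinuityDerivative_succ]
  exact mem_iInter.1 hx ⟨Order.succ b, ha.succ_lt hb⟩

theorem isClosed_iteratedDiscontinuityDerivative (a : Ordinal.{u}) : IsClosed (S a) := by
  induction a using WellFoundedLT.induction with
  | _ a ih =>
    rw [iteratedDiscontinuityDerivative]
    exact isClosed_iInter fun b => (ih b b.2).discontinuityDerivative

theorem WeaklyDiscontinuous.strictAnti_iteratedDiscontinuityDerivative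
    (hf : WeaklyDiscontinuous f) (hne : ∀ a, (S a).Nonempty) : StrictAnti S := by
  intro a b hab
  have hssub : discontinuityDerivative f (S a) ⊂ S a :=
    discontinuityDerivative_subset.ssubset_of_ne (hf.discontinuityDerivative_ne (hne a))
  calc S b ⊆ S (Order.succ a) := antitone_iteratedDiscontinuityDerivative (Order.succ_le_of_lt hab)
    _ = discontinuityDerivative f (S a) := iteratedDiscontinuityDerivative_succ a
    _ ⊂ S a := hssub

theorem WeaklyDiscontinuous.exists_iteratedDiscontinuityDerivative_eq_empty
    (hf : WeaklyDiscontinuous f) : ∃ a, S a = ∅ := by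
  by_contra! hne
  exact not_injective_of_ordinal S
    (hf.strictAnti_iteratedDiscontinuityDerivative hne).injective

theorem piecewiseContinuousOn_compl_iteratedDiscontinuityDerivative [ParacompactSpace X]
    (hperf : ∀ C : Set X, IsClosed C → IsGδ C) (a : Ordinal.{u}) :
    PiecewiseContinuousOn f (S a)ᶜ := by
  induction a using WellFoundedLT.induction with
  | _ a ih =>
    rcases Ordinal.zero_or_succ_or_isSuccLimit a with rfl | ⟨b, rfl⟩ | ha
    · rw [iteratedDiscontinuityDerivative_zero, compl_univ]
      exact (continuousOn_empty f).piecewiseContinuousOn isClosed_empty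
    · rw [iteratedDiscontinuityDerivative_succ]
      refine ((ih b (Order.lt_succ b)).union
        (piecewiseContinuousOn_diff_discontinuityDerivative hperf
          (isClosed_iteratedDiscontinuityDerivative (f := f) b))).mono fun x hx => ?_
      by_cases hxb : x ∈ S b
      exacts [Or.inr ⟨hxb, hx⟩, Or.inl hxb]
    · rw [compl_iteratedDiscontinuityDerivative_of_isSuccLimit ha]
      exact piecewiseContinuousOn_iUnion_of_isOpen hperf
        (fun b => (isClosed_iteratedDiscontinuityDerivative b).isOpen_compl) fun b => ih b b.2

end IteratedDiscontinuityDerivative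

section HereditarilyBaire

variable {X Y : Type*} [TopologicalSpace X] [TopologicalSpace Y] {f : X → Y}

theorem PiecewiseContinuous.exists_isOpen_continuousWithinAt
    (hhb : ∀ C : Set X, IsClosed C → BaireSpace C) (hf : PiecewiseContinuous f)
    {A : Set X} (hA : A.Nonempty) :
    ∃ W : Set X, IsOpen W ∧ (W ∩ A).Nonempty ∧ ∀ x ∈ W ∩ A, ContinuousWithinAt f A x := by
  obtain ⟨C, hC, hcl, hcov, hcont⟩ := hf
  have : BaireSpace (closure A) := hhb _ isClosed_closure
  have : Countable C := hC.to_subtype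
  have : Nonempty (closure A) := (hA.mono subset_closure).to_subtype
  have hcovK : ⋃ c : C, ((↑) ⁻¹' c.1 : Set (closure A)) = univ := by
    rw [← preimage_iUnion, ← sUnion_eq_iUnion, hcov, preimage_univ]
  obtain ⟨c, k, hk⟩ := nonempty_interior_of_iUnion_of_closed
    (fun c : C => (hcl c c.2).preimage continuous_subtype_val) hcovK
  set P : Set (closure A) := (↑) ⁻¹' (c : Set X)
  obtain ⟨W, hW, hWP⟩ := isOpen_induced_iff.1 (isOpen_interior (s := P))
  have hWc : W ∩ A ⊆ c := fun x hx => by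
    have hxW : (⟨x, subset_closure hx.2⟩ : closure A) ∈ (↑) ⁻¹' W := hx.1
    rw [hWP] at hxW
    exact interior_subset (s := P) hxW
  refine ⟨W, hW, mem_closure_iff.1 k.2 W hW (hWP.symm ▸ hk : k ∈ (↑) ⁻¹' W), fun x hx => ?_⟩
  exact (hcont c c.2 x (hWc hx)).mono_of_mem_nhdsWithin (mem_nhdsWithin.2 ⟨W, hW, hx.1, hWc⟩)

theorem weaklyDiscontinuous_of_forall_exists_isOpen
    (h : ∀ A : Set X, A.Nonempty →
      ∃ W : Set X, IsOpen W ∧ (W ∩ A).Nonempty ∧ ∀ x ∈ W ∩ A, ContinuousWithinAt f A x) :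
    WeaklyDiscontinuous f := by
  intro A _
  refine eq_empty_iff_forall_notMem.2 fun b hb => ?_
  obtain ⟨t, htD, ht, hbt⟩ := mem_interior.1 hb
  obtain ⟨V, hV, rfl⟩ := isOpen_induced_iff.1 ht
  obtain ⟨W, hW, ⟨y, hyW, hyA, hyV⟩, hcont⟩ := h (A ∩ V) ⟨b, b.2, hbt⟩
  have hy : (⟨y, hyA⟩ : A) ∈ closure {a : A | ¬ ContinuousWithinAt f A (a : X)} := htD hyV
  obtain ⟨z, ⟨hzW, hzV⟩, hzD⟩ := mem_closure_iff.1 hy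
    ((↑) ⁻¹' (W ∩ V)) ((hW.inter hV).preimage continuous_subtype_val) ⟨hyW, hyV⟩
  exact hzD ((continuousWithinAt_inter (hV.mem_nhds hzV)).1 (hcont z ⟨hzW, z.2, hzV⟩))

end HereditarilyBaire

theorem weaklyDiscontinuous_iff_piecewiseContinuous
    {X Y : Type*} [TopologicalSpace X] [TopologicalSpace Y]
    [ParacompactSpace X]
    (hperf : ∀ C : Set X, IsClosed C → IsGδ C)
    (hhb : ∀ C : Set X, IsClosed C → BaireSpace C)
    (f : X → Y) :
    WeaklyDiscontinuous f ↔ PiecewiseContinuous f := by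
  refine ⟨fun hf => ?_, fun hf => weaklyDiscontinuous_of_forall_exists_isOpen fun A hA =>
    hf.exists_isOpen_continuousWithinAt hhb hA⟩
  obtain ⟨a, ha⟩ := hf.exists_iteratedDiscontinuityDerivative_eq_empty
  rw [← piecewiseContinuousOn_univ_iff, ← compl_empty, ← ha]
  exact piecewiseContinuousOn_compl_iteratedDiscontinuityDerivative hperf a
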